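/- Let ξ₀(s) = ∫₀¹ ((1−x)/(1+x))·s·x^{s−1} dx for s > 0. Then s·ξ₀′(s) + ξ₀(s) > 0 for every s > 0; equivalently, (log(s·ξ₀(s)))′ > 0. -/

import Mathlib

open MeasureTheory Real Set

noncomputable def ξ₀ (s : ℝ) : ℝ :=
  ∫ x in (0:ℝ)..1, ((1 - x) / (1 + x)) * (s * x ^ (s - 1))

noncomputable def ξ₀' (s : ℝ) : ℝ :=
  ∫ x in (0:ℝ)..1, 2 * x ^ s * Real.log x / (1 + x) ^ 2

/-!
Integrating by parts against `d(t ^ s)` gives `ξ₀ s = ∫₀¹ t ^ s * 2 / (1 + t) ^ 2` and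
`s * ξ₀ s = 1 / 2 - ∫₀¹ t ^ s * h t`, where
`h = (t ↦ 2 * t / (1 + t) ^ 2)' = 2 * (1 - t) / (1 + t) ^ 3`.
Differentiating both in `s` under the integral sign, `s * ξ₀' s + ξ₀ s = (s * ξ₀ s)'`
equals `∫₀¹ t ^ s * (-log t) * h t`, whose integrand is positive on `(0, 1)`.
-/

open Filter
open scoped Interval

theorem continuousOn_rpow_mul_log {a : ℝ} (ha : 0 < a) :
    ContinuousOn (fun t : ℝ => t ^ a * log t) (Ici 0) := by
  intro t ht
  rcases (mem_Ici.mp ht).eq_or_lt with rfl | ht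
  · rw [← continuousWithinAt_Ioi_iff_Ici, ContinuousWithinAt, zero_rpow ha.ne', zero_mul]
    simpa only [mul_comm] using tendsto_log_mul_rpow_nhdsGT_zero ha
  · exact ((continuousAt_rpow_const t a (Or.inl ht.ne')).mul
      (continuousAt_log ht.ne')).continuousWithinAt

theorem hasDerivAt_integral_rpow_mul {g : ℝ → ℝ} (hg : ContinuousOn g (Icc 0 1)) {s : ℝ}
    (hs : 0 < s) :
    HasDerivAt (fun u => ∫ t in (0:ℝ)..1, t ^ u * g t)
      (∫ t in (0:ℝ)..1, t ^ s * log t * g t) s := by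
  have hIoc : Ι (0:ℝ) 1 = Ioc 0 1 := uIoc_of_le zero_le_one
  have hIcc : [[(0:ℝ), 1]] = Icc 0 1 := uIcc_of_le zero_le_one
  have hrpow (u : ℝ) : ContinuousOn (fun t : ℝ => t ^ u) (Ioc 0 1) := fun t ht =>
    (continuousAt_rpow_const t u (Or.inl ht.1.ne')).continuousWithinAt
  have hg' : ContinuousOn g (Ioc 0 1) := hg.mono Ioc_subset_Icc_self
  -- for `u > s / 2`, `|t ^ u * log t|` is dominated by `-(t ^ (s / 2) * log t)`,
  -- which is continuous on `[0, 1]`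
  refine (intervalIntegral.hasDerivAt_integral_of_dominated_loc_of_deriv_le
    (F := fun u t => t ^ u * g t) (F' := fun u t => t ^ u * log t * g t) (μ := volume)
    (bound := fun t => -(t ^ (s / 2) * log t) * |g t|)
    (Metric.ball_mem_nhds s (half_pos hs)) (Eventually.of_forall fun u => ?_) ?_ ?_ ?_ ?_ ?_).2
  · rw [hIoc]
    exact ((hrpow u).mul hg').aestronglyMeasurable measurableSet_Ioc
  · exact ((continuous_rpow_const hs.le).continuousOn.mul (hIcc ▸ hg)).intervalIntegrable
  · rw [hIoc]
    exact (((hrpow s).mul (continuousOn_log.mono fun t ht => ht.1.ne')).mul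
      hg').aestronglyMeasurable measurableSet_Ioc
  · refine ae_of_all _ fun t ht u hu => ?_
    rw [hIoc] at ht
    have hu : s / 2 ≤ u := by
      rw [Metric.mem_ball, Real.dist_eq, abs_lt] at hu
      linarith
    have hlog : log t ≤ 0 := log_nonpos ht.1.le ht.2
    rw [norm_mul, norm_mul, norm_of_nonneg (rpow_nonneg ht.1.le u), norm_of_nonpos hlog,
      Real.norm_eq_abs, neg_mul_eq_mul_neg]
    exact mul_le_mul_of_nonneg_right (mul_le_mul_of_nonneg_right
      (rpow_le_rpow_of_exponent_ge ht.1 ht.2 hu) (neg_nonneg.2 hlog)) (abs_nonneg _)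
  · refine ContinuousOn.intervalIntegrable ?_
    rw [hIcc]
    exact (((continuousOn_rpow_mul_log (half_pos hs)).mono Icc_subset_Ici_self).neg).mul hg.abs
  · refine ae_of_all _ fun t ht u _ => ?_
    rw [hIoc] at ht
    exact (hasStrictDerivAt_const_rpow ht.1 u).hasDerivAt.mul_const (g t)

theorem integral_mul_deriv_rpow_eq {u u' : ℝ → ℝ} {s : ℝ} (hs : 0 < s)
    (hu : ∀ t ∈ Icc (0:ℝ) 1, HasDerivAt u (u' t) t) (hu' : ContinuousOn u' (Icc 0 1)) :
    ∫ t in (0:ℝ)..1, u t * (s * t ^ (s - 1)) = u 1 - ∫ t in (0:ℝ)..1, t ^ s * u' t := by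
  have hIcc : [[(0:ℝ), 1]] = Icc 0 1 := uIcc_of_le zero_le_one
  have h := intervalIntegral.integral_mul_deriv_eq_deriv_mul_of_hasDerivAt (a := 0) (b := 1)
    (v := fun t => t ^ s)
    (hIcc ▸ fun t ht => (hu t ht).continuousAt.continuousWithinAt)
    (continuous_rpow_const hs.le).continuousOn
    (fun t ht => hu t (Ioo_subset_Icc_self (by simpa using ht)))
    (fun t ht => hasDerivAt_rpow_const (Or.inl (by simp at ht; exact ht.1.ne')))
    (hu'.intervalIntegrable_of_Icc zero_le_one)
    ((intervalIntegral.intervalIntegrable_rpow' (by linarith)).const_mul s)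
  simpa [zero_rpow hs.ne', mul_comm] using h

theorem continuousOn_div_one_add_pow {f : ℝ → ℝ} (hf : Continuous f) (n : ℕ) :
    ContinuousOn (fun t : ℝ => f t / (1 + t) ^ n) (Icc 0 1) :=
  hf.continuousOn.div (by fun_prop) fun t ht => by have := ht.1; positivity

theorem ξ₀_eq_integral {s : ℝ} (hs : 0 < s) :
    ξ₀ s = ∫ t in (0:ℝ)..1, t ^ s * (2 / (1 + t) ^ 2) := by
  have hu (t : ℝ) (ht : t ∈ Icc (0:ℝ) 1) :
      HasDerivAt (fun t => (1 - t) / (1 + t)) (-2 / (1 + t) ^ 2) t := by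
    have ht' : 1 + t ≠ 0 := by linarith [ht.1]
    refine (((hasDerivAt_id' t).const_sub 1).fun_div ((hasDerivAt_id' t).const_add 1)
      ht').congr_deriv ?_
    field_simp
    ring
  rw [ξ₀, integral_mul_deriv_rpow_eq hs hu
    (continuousOn_div_one_add_pow (f := fun _ => -2) continuous_const 2)]
  simp only [sub_self, zero_div, zero_sub, ← intervalIntegral.integral_neg]
  refine intervalIntegral.integral_congr fun t _ => ?_
  ring

theorem mul_ξ₀_eq {s : ℝ} (hs : 0 < s) :
    s * ξ₀ s = 1 / 2 - ∫ t in (0:ℝ)..1, t ^ s * (2 * (1 - t) / (1 + t) ^ 3) := by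
  have hu (t : ℝ) (ht : t ∈ Icc (0:ℝ) 1) :
      HasDerivAt (fun t => 2 * t / (1 + t) ^ 2) (2 * (1 - t) / (1 + t) ^ 3) t := by
    have ht' : 1 + t ≠ 0 := by linarith [ht.1]
    refine (((hasDerivAt_id' t).const_mul 2).fun_div (((hasDerivAt_id' t).const_add 1).fun_pow 2)
      (pow_ne_zero 2 ht')).congr_deriv ?_
    field_simp
    ring
  have hcont := continuousOn_div_one_add_pow (f := fun t => 2 * (1 - t)) (by fun_prop) 3
  rw [show (1 / 2 : ℝ) = 2 * 1 / (1 + 1) ^ 2 by norm_num,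
    ← integral_mul_deriv_rpow_eq hs hu hcont, ξ₀_eq_integral hs,
    ← intervalIntegral.integral_const_mul]
  refine intervalIntegral.integral_congr fun t ht => ?_
  rw [uIcc_of_le zero_le_one] at ht
  have hts : t ^ s = t * t ^ (s - 1) := by
    rw [← rpow_one_add' ht.1 (by linarith)]
    ring_nf
  rw [hts]
  ring

theorem hasDerivAt_ξ₀ {s : ℝ} (hs : 0 < s) : HasDerivAt ξ₀ (ξ₀' s) s := by
  have h := hasDerivAt_integral_rpow_mul
    (continuousOn_div_one_add_pow (f := fun _ => 2) continuous_const 2) hs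
  have hξ₀' : ξ₀' s = ∫ t in (0:ℝ)..1, t ^ s * log t * (2 / (1 + t) ^ 2) :=
    intervalIntegral.integral_congr fun t _ => by ring
  rw [hξ₀']
  exact h.congr_of_eventuallyEq ((eventually_gt_nhds hs).mono fun u hu => ξ₀_eq_integral hu)

theorem ξ₀_pos {s : ℝ} (hs : 0 < s) : 0 < ξ₀ s := by
  rw [ξ₀_eq_integral hs]
  refine intervalIntegral.intervalIntegral_pos_of_pos_on ?_ (fun t ht => ?_) zero_lt_one
  · exact ((continuous_rpow_const hs.le).continuousOn.mul
      (continuousOn_div_one_add_pow (f := fun _ => 2) continuous_const 2)).intervalIntegrable_of_Icc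
      zero_le_one
  · have := ht.1
    positivity

theorem mul_ξ₀'_add_ξ₀_eq {s : ℝ} (hs : 0 < s) :
    s * ξ₀' s + ξ₀ s = -∫ t in (0:ℝ)..1, t ^ s * log t * (2 * (1 - t) / (1 + t) ^ 3) := by
  have h₁ : HasDerivAt (fun u => u * ξ₀ u) (1 * ξ₀ s + s * ξ₀' s) s :=
    (hasDerivAt_id' s).mul (hasDerivAt_ξ₀ hs)
  have h₂ : HasDerivAt (fun u => u * ξ₀ u)
      (-∫ t in (0:ℝ)..1, t ^ s * log t * (2 * (1 - t) / (1 + t) ^ 3)) s :=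
    ((hasDerivAt_integral_rpow_mul (continuousOn_div_one_add_pow (by fun_prop) 3) hs).const_sub
      (1 / 2)).congr_of_eventuallyEq ((eventually_gt_nhds hs).mono fun u hu => mul_ξ₀_eq hu)
  linarith [h₂.unique h₁]

theorem mul_ξ₀'_add_ξ₀_pos {s : ℝ} (hs : 0 < s) : 0 < s * ξ₀' s + ξ₀ s := by
  rw [mul_ξ₀'_add_ξ₀_eq hs, ← intervalIntegral.integral_neg]
  refine intervalIntegral.intervalIntegral_pos_of_pos_on ?_ (fun t ht => ?_) zero_lt_one
  · refine ContinuousOn.intervalIntegrable_of_Icc zero_le_one ?_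
    exact (((continuousOn_rpow_mul_log hs).mono Icc_subset_Ici_self).mul
      (continuousOn_div_one_add_pow (f := fun t => 2 * (1 - t)) (by fun_prop) 3)).neg
  · have hweight : 0 < 2 * (1 - t) / (1 + t) ^ 3 :=
      div_pos (by linarith [ht.2]) (by have := ht.1; positivity)
    rw [neg_pos]
    exact mul_neg_of_neg_of_pos
      (mul_neg_of_pos_of_neg (rpow_pos_of_pos ht.1 s) (log_neg ht.1 ht.2)) hweight

theorem s_xi0'_add_xi0_pos (s : ℝ) (hs : 0 < s) :
    s * ξ₀' s + ξ₀ s > 0 ∧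
    HasDerivAt (fun u => Real.log (u * ξ₀ u)) ((s * ξ₀' s + ξ₀ s) / (s * ξ₀ s)) s ∧
    (s * ξ₀' s + ξ₀ s) / (s * ξ₀ s) > 0 := by
  have hpos := mul_ξ₀'_add_ξ₀_pos hs
  have hsξ₀ : 0 < s * ξ₀ s := mul_pos hs (ξ₀_pos hs)
  refine ⟨hpos, ?_, div_pos hpos hsξ₀⟩
  convert ((hasDerivAt_id' s).fun_mul (hasDerivAt_ξ₀ hs)).log hsξ₀.ne' using 2
  ring
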